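/- Let q ≥ 2 be an integer, let Π be a finite projective plane of order q, let μ ≥ 2 be an integer, set δ = 1/√((q+1)·ln(q+1)), and let D ≥ 1 be a real number. Suppose Π contains a (1, μ−1)-saturating set of size k with k ≤ 2D·√((q+1)·ln(q+1)) + 2. Then Π contains a (1, μ)-saturating set of size at most 2·(D + 1 + (D+δ)/q + δ)·√((q+1)·ln(q+1)) + 2. -/

import Mathlib

open scoped Classical in
/-- The number of secants of a point set `S` through a point `Q`, counted with multiplicity:
the multiplicity of a line `ℓ` is `C(#(ℓ ∩ S), 2)`. -/
noncomputable def secantCount (L : Type*) {P : Type*} [Membership P L] [Fintype L]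
    (S : Set P) (Q : P) : ℕ :=
  ∑ ℓ : L, if Q ∈ ℓ then ({p ∈ S | p ∈ ℓ}.ncard).choose 2 else 0

/-- A point set `S` in a projective plane (with line type `L`) is *(1,μ)-saturating* if for
every point `Q` not in `S` the number of secants of `S` through `Q`, counted with
multiplicity, is at least `μ`. -/
def IsMuSaturating (L : Type*) {P : Type*} [Membership P L] [Fintype L]
    (S : Set P) (μ : ℕ) : Prop :=
  ∀ Q : P, Q ∉ S → μ ≤ secantCount L S Q

/-!
Greedy covering. Grow a set `K` disjoint from `S` one point at a time; a point `Q ∉ S ∪ K`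
is covered once it lies on a line through a point of `K` and another point of `S ∪ K`, since
then `S ∪ K` has strictly more secants through `Q` than `S`. An uncovered `Q` has at least
`(q - 1)|K| + (q - |S|)` points whose addition covers it, so by double counting some point
shrinks the uncovered set by a factor `1 - f/N ≤ exp (-f/N)` with `N = |Sᶜ|`. After
`k = ⌈2√((q+1) log(q+1))⌉ + 1` steps fewer than one point is left, because
`N log N < ∑_{i<k} ((q - 1) i + (q - |S|))` once `q ≥ 4`; for `q ≤ 3` the whole plane is
small enough.
-/

open Finset Configuration

open scoped Classical

section Secants

variable {P L : Type*} [Membership P L]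

lemma ncard_sep_mem_eq_card_filter (S : Finset P) (ℓ : L) :
    {p ∈ (S : Set P) | p ∈ ℓ}.ncard = #{p ∈ S | p ∈ ℓ} := by
  rw [← Set.ncard_coe_finset, coe_filter]
  rfl

lemma Nat.choose_two_lt_choose_two {a b : ℕ} (hab : a < b) (hb : 2 ≤ b) :
    a.choose 2 < b.choose 2 := by
  rcases a with _ | a
  · exact Nat.choose_pos hb
  · calc (a + 1).choose 2 < (a + 1) + (a + 1).choose 2 := by omega
      _ = (a + 1).choose 1 + (a + 1).choose 2 := by rw [Nat.choose_one_right]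
      _ = (a + 2).choose 2 := (Nat.choose_succ_succ (a + 1) 1).symm
      _ ≤ b.choose 2 := Nat.choose_le_choose 2 hab

variable (L) in
def OnNewSecant (S K : Finset P) (Q : P) : Prop :=
  ∃ ℓ : L, Q ∈ ℓ ∧ ∃ p ∈ K, ∃ p' ∈ S ∪ K, p ≠ p' ∧ p ∈ ℓ ∧ p' ∈ ℓ

lemma OnNewSecant.mono {S K K' : Finset P} {Q : P} (h : OnNewSecant L S K Q) (hK : K ⊆ K') :
    OnNewSecant L S K' Q := by
  obtain ⟨ℓ, hQ, p, hp, p', hp', hne, hpℓ, hp'ℓ⟩ := h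
  exact ⟨ℓ, hQ, p, hK hp, p', union_subset_union_right hK hp', hne, hpℓ, hp'ℓ⟩

variable [Fintype L]

lemma secantCount_empty (Q : P) : secantCount L (∅ : Set P) Q = 0 := by
  simp [secantCount]

lemma IsMuSaturating.nonempty {S : Finset P} {ν : ℕ} (hS : IsMuSaturating L (S : Set P) ν)
    (hν : 1 ≤ ν) {Q : P} (hQ : Q ∉ S) : S.Nonempty := by
  by_contra hne
  have := hS Q (by simpa using hQ)
  rw [not_nonempty_iff_eq_empty.mp hne, coe_empty, secantCount_empty] at this
  omega

lemma secantCount_lt_of_onNewSecant {S K : Finset P} (hSK : Disjoint S K) {Q : P}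
    (hQ : OnNewSecant L S K Q) :
    secantCount L (S : Set P) Q < secantCount L ((S ∪ K : Finset P) : Set P) Q := by
  obtain ⟨ℓ₀, hQℓ₀, p, hpK, p', hp', hpp', hpℓ₀, hp'ℓ₀⟩ := hQ
  unfold secantCount
  simp only [ncard_sep_mem_eq_card_filter]
  refine sum_lt_sum (fun ℓ _ => ?_) ⟨ℓ₀, mem_univ _, ?_⟩
  · split_ifs
    · exact Nat.choose_le_choose 2 (card_le_card (filter_subset_filter _ subset_union_left))
    · rfl
  · rw [if_pos hQℓ₀, if_pos hQℓ₀]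
    have hp : p ∈ {x ∈ S ∪ K | x ∈ ℓ₀} := mem_filter.mpr ⟨mem_union_right S hpK, hpℓ₀⟩
    have hsub : {x ∈ S | x ∈ ℓ₀} ⊆ {x ∈ S ∪ K | x ∈ ℓ₀}.erase p := fun x hx => by
      obtain ⟨hxS, hxℓ⟩ := mem_filter.mp hx
      exact mem_erase.mpr ⟨fun h => disjoint_left.mp hSK (h ▸ hxS) hpK,
        mem_filter.mpr ⟨mem_union_left K hxS, hxℓ⟩⟩
    have htwo : 1 < #{x ∈ S ∪ K | x ∈ ℓ₀} :=
      one_lt_card.mpr ⟨p, hp, p', mem_filter.mpr ⟨hp', hp'ℓ₀⟩, hpp'⟩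
    have := card_le_card hsub
    rw [card_erase_of_mem hp] at this
    exact Nat.choose_two_lt_choose_two (by omega) htwo

end Secants

section Uncovered

variable {P L : Type*} [Membership P L] [Fintype P]

variable (L) in
noncomputable def uncovered (S K : Finset P) : Finset P :=
  {Q ∈ (S ∪ K)ᶜ | ¬ OnNewSecant L S K Q}

lemma mem_uncovered {S K : Finset P} {Q : P} :
    Q ∈ uncovered L S K ↔ Q ∉ S ∪ K ∧ ¬ OnNewSecant L S K Q := by
  simp only [uncovered, mem_filter, mem_compl]

lemma uncovered_insert_subset (S K : Finset P) (R : P) :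
    uncovered L S (insert R K) ⊆ {Q ∈ uncovered L S K | ¬ OnNewSecant L S (insert R K) Q} := by
  intro Q hQ
  simp only [uncovered, mem_filter, mem_compl, mem_union, mem_insert, not_or] at hQ ⊢
  exact ⟨⟨⟨hQ.1.1, hQ.1.2.2⟩, fun h => hQ.2 (h.mono (subset_insert R K))⟩, hQ.2⟩

lemma IsMuSaturating.union_of_uncovered_eq_empty [Fintype L] {S K : Finset P} {ν : ℕ}
    (hS : IsMuSaturating L (S : Set P) ν) (hSK : Disjoint S K) (hK : uncovered L S K = ∅) :
    IsMuSaturating L ((S ∪ K : Finset P) : Set P) (ν + 1) := by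
  intro Q hQ
  have hQSK : Q ∈ (S ∪ K)ᶜ := by simpa using hQ
  have hnew : OnNewSecant L S K Q := by
    by_contra h
    have hmem : Q ∈ uncovered L S K := mem_uncovered.mpr ⟨mem_compl.mp hQSK, h⟩
    simp [hK] at hmem
  have := hS Q fun h => hQ (by simp_all)
  have := secantCount_lt_of_onNewSecant hSK hnew
  omega

end Uncovered

section Coverers

variable {P L : Type*} [Membership P L] [Fintype P]

variable (L) in
/-- The line through `Q` and `p` when `Q ≠ p`; for `p = Q` it is every point on a line
through `Q`. -/
noncomputable def collinearWith (Q p : P) : Finset P :=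
  {R | ∃ ℓ : L, Q ∈ ℓ ∧ p ∈ ℓ ∧ R ∈ ℓ}

lemma mem_collinearWith {Q p R : P} :
    R ∈ collinearWith L Q p ↔ ∃ ℓ : L, Q ∈ ℓ ∧ p ∈ ℓ ∧ R ∈ ℓ := by
  simp only [collinearWith, mem_filter, mem_univ, true_and]

variable (L) in
noncomputable def coverers (S K : Finset P) (Q : P) : Finset P :=
  {R ∈ (S ∪ K)ᶜ | OnNewSecant L S (insert R K) Q}

lemma card_collinearWith [Fintype L] [ProjectivePlane P L] {Q p : P} (h : Q ≠ p) :
    #(collinearWith L Q p) = ProjectivePlane.order P L + 1 := by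
  have hline : collinearWith L Q p = ({R | R ∈ HasLines.mkLine (L := L) h} : Finset P) := by
    ext R
    rw [mem_collinearWith, mem_filter]
    refine ⟨fun ⟨ℓ, hQ, hp, hR⟩ => ⟨mem_univ R, ?_⟩, fun hR => ⟨_, (HasLines.mkLine_ax h).1,
      (HasLines.mkLine_ax h).2, hR.2⟩⟩
    obtain rfl := (Nondegenerate.eq_or_eq hQ hp (HasLines.mkLine_ax h).1
      (HasLines.mkLine_ax h).2).resolve_left h
    exact hR
  rw [hline, ← ProjectivePlane.pointCount_eq P (HasLines.mkLine (L := L) h), pointCount,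
    Nat.card_eq_fintype_card, Fintype.card_subtype]

lemma mem_collinearWith_left [ProjectivePlane P L] {Q p : P} (h : Q ≠ p) :
    Q ∈ collinearWith L Q p :=
  mem_collinearWith.mpr ⟨_, (HasLines.mkLine_ax h).1, (HasLines.mkLine_ax h).2,
    (HasLines.mkLine_ax h).1⟩

lemma mem_collinearWith_right [ProjectivePlane P L] {Q p : P} (h : Q ≠ p) :
    p ∈ collinearWith L Q p :=
  mem_collinearWith.mpr ⟨_, (HasLines.mkLine_ax h).1, (HasLines.mkLine_ax h).2,
    (HasLines.mkLine_ax h).2⟩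

variable {S K : Finset P} {Q : P}

lemma sdiff_subset_coverers {p : P} (hp : p ∈ S ∪ K) :
    (collinearWith L Q p).erase Q \ (S ∪ K) ⊆ coverers L S K Q := by
  intro R hR
  obtain ⟨hR, hRSK⟩ := mem_sdiff.mp hR
  obtain ⟨ℓ, hQ, hpℓ, hRℓ⟩ := mem_collinearWith.mp (mem_erase.mp hR).2
  refine mem_filter.mpr ⟨mem_compl.mpr hRSK, ℓ, hQ, R, mem_insert_self R K, p, ?_,
    fun h => hRSK (h ▸ hp), hRℓ, hpℓ⟩
  exact union_subset_union_right (subset_insert R K) hp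

lemma order_sub_one_le_card_sdiff [Fintype L] [ProjectivePlane P L]
    (hQ : Q ∈ uncovered L S K) {p : P} (hp : p ∈ K) :
    ProjectivePlane.order P L - 1 ≤ #((collinearWith L Q p).erase Q \ (S ∪ K)) := by
  obtain ⟨hQSK, hQnew⟩ := mem_uncovered.mp hQ
  have hQp : Q ≠ p := fun h => hQSK (mem_union_right S (h ▸ hp))
  have hsub : ((collinearWith L Q p).erase Q).erase p ⊆
      (collinearWith L Q p).erase Q \ (S ∪ K) := by
    intro R hR
    obtain ⟨hRp, hR⟩ := mem_erase.mp hR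
    refine mem_sdiff.mpr ⟨hR, fun hRSK => hQnew ?_⟩
    obtain ⟨ℓ, hQℓ, hpℓ, hRℓ⟩ := mem_collinearWith.mp (mem_erase.mp hR).2
    exact ⟨ℓ, hQℓ, p, hp, R, hRSK, Ne.symm hRp, hpℓ, hRℓ⟩
  have := card_le_card hsub
  rw [card_erase_of_mem (mem_erase.mpr ⟨hQp.symm, mem_collinearWith_right hQp⟩),
    card_erase_of_mem (mem_collinearWith_left hQp), card_collinearWith hQp] at this
  omega

lemma order_sub_card_le_card_sdiff [Fintype L] [ProjectivePlane P L]
    (hQ : Q ∈ uncovered L S K) {p : P} (hp : p ∈ S) :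
    ProjectivePlane.order P L - #S ≤ #((collinearWith L Q p).erase Q \ (S ∪ K)) := by
  obtain ⟨hQSK, hQnew⟩ := mem_uncovered.mp hQ
  have hQp : Q ≠ p := fun h => hQSK (mem_union_left K (h ▸ hp))
  have hsub : (collinearWith L Q p).erase Q \ S ⊆ (collinearWith L Q p).erase Q \ (S ∪ K) := by
    intro R hR
    obtain ⟨hR, hRS⟩ := mem_sdiff.mp hR
    refine mem_sdiff.mpr ⟨hR, fun hRSK => ?_⟩
    obtain ⟨ℓ, hQℓ, hpℓ, hRℓ⟩ := mem_collinearWith.mp (mem_erase.mp hR).2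
    exact hQnew ⟨ℓ, hQℓ, R, (mem_union.mp hRSK).resolve_left hRS, p, mem_union_left K hp,
      fun h => hRS (h ▸ hp), hRℓ, hpℓ⟩
  have := (le_card_sdiff S _).trans (card_le_card hsub)
  rwa [card_erase_of_mem (mem_collinearWith_left hQp), card_collinearWith hQp,
    Nat.add_sub_cancel] at this

lemma disjoint_sdiff_collinearWith [ProjectivePlane P L] (hQ : Q ∈ uncovered L S K)
    {p p' : P} (hp : p ∈ K) (hp' : p' ∈ S ∪ K) (hpp' : p ≠ p') :
    Disjoint ((collinearWith L Q p).erase Q \ (S ∪ K))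
      ((collinearWith L Q p').erase Q \ (S ∪ K)) := by
  refine disjoint_left.mpr fun R hR hR' => (mem_uncovered.mp hQ).2 ?_
  obtain ⟨hRQ, hR⟩ := mem_erase.mp (mem_sdiff.mp hR).1
  obtain ⟨ℓ, hQℓ, hpℓ, hRℓ⟩ := mem_collinearWith.mp hR
  obtain ⟨ℓ', hQℓ', hp'ℓ', hRℓ'⟩ := mem_collinearWith.mp (mem_erase.mp (mem_sdiff.mp hR').1).2
  obtain rfl := (Nondegenerate.eq_or_eq hQℓ hRℓ hQℓ' hRℓ').resolve_left hRQ.symm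
  exact ⟨ℓ, hQℓ, p, hp, p', hp', hpp', hpℓ, hp'ℓ'⟩

/-- The lines joining `Q` to the points of `K`, together with one line joining `Q` to a point
of `S`, are distinct since `Q` is uncovered; the points on them off `S ∪ K` are coverers. -/
lemma le_card_coverers [Fintype L] [ProjectivePlane P L] (hSK : Disjoint S K)
    {p₀ : P} (hp₀ : p₀ ∈ S) (hQ : Q ∈ uncovered L S K) :
    (ProjectivePlane.order P L - 1) * #K + (ProjectivePlane.order P L - #S) ≤
      #(coverers L S K Q) := by
  set piece : P → Finset P := fun p => (collinearWith L Q p).erase Q \ (S ∪ K)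
  have hp₀K : p₀ ∉ K := disjoint_left.mp hSK hp₀
  have hmem : ∀ p ∈ insert p₀ K, p ∈ S ∪ K := fun p hp =>
    (mem_insert.mp hp).elim (fun h => mem_union_left K (h ▸ hp₀)) (mem_union_right S)
  have hdisj : (↑(insert p₀ K) : Set P).PairwiseDisjoint piece := by
    intro p hp p' hp' hne
    rcases mem_insert.mp hp with rfl | hpK
    · exact (disjoint_sdiff_collinearWith hQ ((mem_insert.mp hp').resolve_left hne.symm)
        (hmem p (mem_insert_self p K)) hne.symm).symm
    · exact disjoint_sdiff_collinearWith hQ hpK (hmem p' hp') hne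
  calc (ProjectivePlane.order P L - 1) * #K + (ProjectivePlane.order P L - #S)
      ≤ ∑ p ∈ K, #(piece p) + #(piece p₀) := by
        gcongr
        · rw [mul_comm, ← smul_eq_mul]
          exact card_nsmul_le_sum K _ _ fun p hp => order_sub_one_le_card_sdiff hQ hp
        · exact order_sub_card_le_card_sdiff hQ hp₀
    _ = #((insert p₀ K).biUnion piece) := by rw [card_biUnion hdisj, sum_insert hp₀K, add_comm]
    _ ≤ #(coverers L S K Q) :=
        card_le_card (biUnion_subset.mpr fun p hp => sdiff_subset_coverers (hmem p hp))

end Coverers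

theorem Finset.exists_card_mul_le_card_mul_card_filter {α β : Type*} (s : Finset α)
    {t : Finset β} (ht : t.Nonempty) (r : α → β → Prop) [∀ a b, Decidable (r a b)] {m : ℕ}
    (hm : ∀ a ∈ s, m ≤ #{b ∈ t | r a b}) : ∃ b ∈ t, #s * m ≤ #t * #{a ∈ s | r a b} := by
  obtain ⟨b, hb, hmax⟩ := t.exists_max_image (fun b => #{a ∈ s | r a b}) ht
  exact ⟨b, hb, card_mul_le_card_mul r hm hmax⟩

section Greedy

variable {P L : Type*} [Membership P L] [Fintype P] [Fintype L] [ProjectivePlane P L]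
variable {S : Finset P}

/-- The greedy step: some candidate covers at least the average number of uncovered points. -/
lemma exists_card_uncovered_insert_le {K : Finset P} (hSK : Disjoint S K) (hS : S.Nonempty)
    (hC : (S ∪ K)ᶜ.Nonempty) :
    ∃ R ∉ S ∪ K, (#(uncovered L S (insert R K)) : ℝ) ≤ #(uncovered L S K) *
      Real.exp (-(((ProjectivePlane.order P L - 1) * #K + (ProjectivePlane.order P L - #S) : ℕ)
        : ℝ) / #Sᶜ) := by
  obtain ⟨p₀, hp₀⟩ := hS
  set f := (ProjectivePlane.order P L - 1) * #K + (ProjectivePlane.order P L - #S)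
  obtain ⟨R, hR, hcount⟩ := exists_card_mul_le_card_mul_card_filter (uncovered L S K) hC
    (fun Q R => OnNewSecant L S (insert R K) Q) fun Q hQ => le_card_coverers hSK hp₀ hQ
  refine ⟨R, mem_compl.mp hR, ?_⟩
  have hsplit : #(uncovered L S (insert R K)) +
      #{Q ∈ uncovered L S K | OnNewSecant L S (insert R K) Q} ≤ #(uncovered L S K) := by
    have := card_le_card (uncovered_insert_subset (L := L) S K R)
    have := card_filter_add_card_filter_not (s := uncovered L S K)
      (p := fun Q => OnNewSecant L S (insert R K) Q)
    omega
  have hCN : #(S ∪ K)ᶜ ≤ #Sᶜ := card_le_card (compl_subset_compl.mpr subset_union_left)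
  have hCpos : (0 : ℝ) < #(S ∪ K)ᶜ := by exact_mod_cast hC.card_pos
  set b := #(uncovered L S K)
  set x := #{Q ∈ uncovered L S K | OnNewSecant L S (insert R K) Q}
  have hbf : (b : ℝ) * f / #Sᶜ ≤ x := by
    rw [div_le_iff₀ (hCpos.trans_le (by exact_mod_cast hCN))]
    calc (b : ℝ) * f ≤ #(S ∪ K)ᶜ * x := by exact_mod_cast hcount
      _ ≤ x * #Sᶜ := by rw [mul_comm]; gcongr
  calc (#(uncovered L S (insert R K)) : ℝ) ≤ b - x := by
        rw [le_sub_iff_add_le]; exact_mod_cast hsplit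
    _ ≤ b * (-(f : ℝ) / #Sᶜ + 1) := by
        rw [mul_add, mul_one, mul_div_assoc', mul_neg, neg_div]; linarith
    _ ≤ b * Real.exp (-(f : ℝ) / #Sᶜ) := by gcongr; exact Real.add_one_le_exp _

lemma exists_card_uncovered_le (hS : S.Nonempty) {j : ℕ} (hj : j ≤ #Sᶜ) :
    ∃ K, Disjoint S K ∧ #K = j ∧ (#(uncovered L S K) : ℝ) ≤ #Sᶜ * Real.exp
      (-((∑ i ∈ range j, ((ProjectivePlane.order P L - 1) * i + (ProjectivePlane.order P L - #S))
        : ℕ) : ℝ) / #Sᶜ) := by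
  induction j with
  | zero =>
    refine ⟨∅, disjoint_empty_right S, card_empty, ?_⟩
    rw [sum_range_zero, Nat.cast_zero, neg_zero, zero_div, Real.exp_zero, mul_one]
    have : uncovered L S ∅ ⊆ Sᶜ := by
      unfold uncovered
      rw [union_empty]
      exact filter_subset _ _
    exact_mod_cast card_le_card this
  | succ j ih =>
    obtain ⟨K, hSK, hK, hbound⟩ := ih (by omega)
    have hC : (S ∪ K)ᶜ.Nonempty := by
      rw [← card_pos, card_compl, card_union_of_disjoint hSK, hK]
      rw [card_compl] at hj
      omega
    obtain ⟨R, hR, hstep⟩ := exists_card_uncovered_insert_le (L := L) hSK hS hC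
    obtain ⟨hRS, hRK⟩ := not_or.mp (mem_union.not.mp hR)
    refine ⟨insert R K, disjoint_insert_right.mpr ⟨hRS, hSK⟩,
      by rw [card_insert_of_notMem hRK, hK], hstep.trans ?_⟩
    calc _ ≤ _ := mul_le_mul_of_nonneg_right hbound (Real.exp_pos _).le
      _ = _ := by
        rw [mul_assoc, ← Real.exp_add, hK, sum_range_succ]
        congr 2
        push_cast
        ring

end Greedy

section Estimates

open Real

lemma Real.log_le_sqrt_mul_log {x : ℝ} (hx : 1 ≤ x) : log x ≤ √(x * log x) := by
  have hlog := log_nonneg hx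
  rw [le_sqrt hlog (by positivity), sq]
  exact mul_le_mul_of_nonneg_right ((log_le_sub_one_of_pos (by linarith)).trans (by linarith)) hlog

lemma four_mul_log_lt {q : ℝ} (hq : 4 ≤ q) :
    4 * log (q + 1) < (q - 1) * √((q + 1) * log (q + 1)) := by
  have hlog : 0 < log (q + 1) := log_pos (by linarith)
  -- `log x ≤ x / e` and `e > 8 / 3`
  have hle : log (q + 1) ≤ (q + 1) / exp 1 := by
    have := log_le_sub_one_of_pos (show 0 < (q + 1) / exp 1 by positivity)
    rw [log_div (by linarith) (exp_pos 1).ne', log_exp] at this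
    linarith
  have he : (q + 1) / exp 1 < 3 / 8 * (q + 1) := by
    rw [div_lt_iff₀ (exp_pos 1)]
    nlinarith [exp_one_gt_d9]
  have hsq : (4 * log (q + 1)) ^ 2 < ((q - 1) * √((q + 1) * log (q + 1))) ^ 2 := by
    have e : ((q - 1) * √((q + 1) * log (q + 1))) ^ 2 =
        (q - 1) ^ 2 * ((q + 1) * log (q + 1)) := by
      rw [mul_pow, sq_sqrt (by positivity)]
    have h16 : 16 * log (q + 1) < (q - 1) ^ 2 * (q + 1) := by nlinarith
    rw [e]
    nlinarith [mul_lt_mul_of_pos_right h16 hlog]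
  exact lt_of_pow_lt_pow_left₀ 2 (mul_nonneg (by linarith) (sqrt_nonneg _)) hsq

/-- The inequality `N log N < F` that makes `N exp (-F / N) < 1`, where `N = #Sᶜ`,
`t = q - #S` and `F = ∑_{i<k} ((q - 1) i + t)`. -/
lemma mul_log_lt_of_four_le {q : ℕ} (hq : 4 ≤ q) {N t k : ℝ} (hN : 1 ≤ N)
    (hNt : N ≤ q ^ 2 + 1 + t) (hNq : N ≤ (q + 1) ^ 2) (ht : 0 ≤ t)
    (hk : 2 * √((q + 1) * log (q + 1)) + 1 ≤ k) :
    N * log N < (q - 1) * (k * (k - 1) / 2) + t * k := by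
  have hq' : (4 : ℝ) ≤ q := by exact_mod_cast hq
  set l := log ((q : ℝ) + 1)
  set r := √((q + 1) * l)
  have hl : 0 < l := log_pos (by linarith)
  have hr : r ^ 2 = (q + 1) * l := sq_sqrt (by positivity)
  have hlr : l ≤ r := log_le_sqrt_mul_log (by linarith)
  have h4 : 4 * l < (q - 1) * r := four_mul_log_lt hq'
  have hlogN : log N ≤ 2 * l :=
    (log_le_log (by linarith) hNq).trans_eq (by rw [log_pow]; push_cast; ring)
  have hkk : 2 * r ^ 2 + r ≤ k * (k - 1) / 2 := by nlinarith [sqrt_nonneg ((q + 1) * l)]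
  calc N * log N ≤ (q ^ 2 + 1 + t) * (2 * l) :=
        mul_le_mul hNt hlogN (log_nonneg hN) (by linarith)
    _ = (q - 1) * (2 * r ^ 2) + 4 * l + t * (2 * l) := by rw [hr]; ring
    _ < (q - 1) * (2 * r ^ 2 + r) + t * k := by
        have : t * (2 * l) ≤ t * k := mul_le_mul_of_nonneg_left (by linarith) ht
        linarith
    _ ≤ (q - 1) * (k * (k - 1) / 2) + t * k := by gcongr; linarith

lemma mul_exp_neg_div_lt_one {N F : ℝ} (hN : 0 < N) (h : N * log N < F) :
    N * exp (-F / N) < 1 := by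
  have : -F / N < -log N := by
    rw [neg_div, neg_lt_neg_iff, lt_div_iff₀ hN, mul_comm]
    exact h
  calc N * exp (-F / N) < N * exp (-log N) := by gcongr
    _ = 1 := by rw [exp_neg, exp_log hN, mul_inv_cancel₀ hN.ne']

lemma natCast_sum_range_mul_add (a b k : ℕ) :
    ((∑ i ∈ range k, (a * i + b) : ℕ) : ℝ) = a * (k * (k - 1) / 2) + b * k := by
  induction k with
  | zero => simp
  | succ k ih =>
    rw [sum_range_succ, Nat.cast_add, ih]
    push_cast
    ring

lemma sq_add_add_one_le_of_lt_four {q : ℕ} (hq : 2 ≤ q) (hq4 : q < 4) :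
    (q : ℝ) ^ 2 + q + 1 ≤ 4 * √((q + 1) * log (q + 1)) + 4 := by
  have hlog2 := log_two_gt_d9
  interval_cases q
  · have : log 2 ≤ log 3 := log_le_log (by norm_num) (by norm_num)
    have : (3 / 4 : ℝ) ≤ √((2 + 1) * log (2 + 1)) := by
      rw [le_sqrt (by norm_num) (by positivity)]; norm_num; linarith
    norm_num at this ⊢; linarith
  · have : log 4 = 2 * log 2 := by
      rw [show (4 : ℝ) = 2 ^ 2 by norm_num, log_pow]; norm_num
    have : (9 / 4 : ℝ) ≤ √((3 + 1) * log (3 + 1)) := by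
      rw [le_sqrt (by norm_num) (by positivity)]; norm_num; linarith
    norm_num at this ⊢; linarith

lemma two_mul_add_two_mul_add_four_le {q r δ D : ℝ} (hq : 0 < q) (hδr : δ * r = 1)
    (hD : 0 ≤ D * r + 1) :
    2 * D * r + 2 * r + 4 ≤ 2 * (D + 1 + (D + δ) / q + δ) * r + 2 := by
  have : 2 * (D + 1 + (D + δ) / q + δ) * r + 2 =
      2 * D * r + 2 * r + 4 + 2 * (D * r + 1) / q := by
    field_simp
    linear_combination (2 * q + 2) * hδr
  rw [this]
  have := div_nonneg (mul_nonneg zero_le_two hD) hq.le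
  linarith

end Estimates

section Extension

variable {P L : Type*} [Membership P L] [Fintype P] [Fintype L] [ProjectivePlane P L]

lemma IsMuSaturating.exists_card_le_add_ceil {S : Finset P} {ν : ℕ}
    (hS : IsMuSaturating L (S : Set P) ν) (hν : 1 ≤ ν) (hq : 4 ≤ ProjectivePlane.order P L) :
    ∃ T : Finset P, IsMuSaturating L (T : Set P) (ν + 1) ∧
      #T ≤ #S + (⌈2 * √(((ProjectivePlane.order P L : ℝ) + 1) *
        Real.log ((ProjectivePlane.order P L : ℝ) + 1))⌉₊ + 1) := by
  set q := ProjectivePlane.order P L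
  set k := ⌈2 * √((q + 1) * Real.log (q + 1))⌉₊ + 1
  by_cases hNk : #Sᶜ ≤ k
  · refine ⟨univ, fun Q hQ => absurd (by simp) hQ, ?_⟩
    rw [card_univ, ← card_add_card_compl S]
    exact Nat.add_le_add_left hNk _
  have hcompl : #Sᶜ = q ^ 2 + q + 1 - #S := by rw [card_compl, ProjectivePlane.card_points P L]
  obtain ⟨Q, hQ⟩ : Sᶜ.Nonempty := card_pos.mp (by omega)
  obtain ⟨K, hSK, hK, hB⟩ := exists_card_uncovered_le (L := L)
    (hS.nonempty hν (mem_compl.mp hQ)) (j := k) (by omega)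
  rw [natCast_sum_range_mul_add, Nat.cast_pred (by omega)] at hB
  have hlog := mul_log_lt_of_four_le (N := #Sᶜ) (t := (q - #S : ℕ)) (k := k) hq
    (by exact_mod_cast (show 1 ≤ #Sᶜ by omega))
    (by exact_mod_cast (show #Sᶜ ≤ q ^ 2 + 1 + (q - #S) by omega))
    (by exact_mod_cast (show #Sᶜ ≤ (q + 1) ^ 2 by rw [hcompl, add_sq]; omega))
    (Nat.cast_nonneg _)
    (by push_cast [k]; linarith [Nat.le_ceil (2 * √((q + 1) * Real.log (q + 1)))])
  have hempty : uncovered L S K = ∅ := by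
    have := hB.trans_lt (mul_exp_neg_div_lt_one (by exact_mod_cast (show 0 < #Sᶜ by omega)) hlog)
    exact card_eq_zero.mp (Nat.lt_one_iff.mp (by exact_mod_cast this))
  exact ⟨S ∪ K, hS.union_of_uncovered_eq_empty hSK hempty,
    (card_union_le S K).trans_eq (by rw [hK])⟩

end Extension

theorem mu_saturating_extension (q : ℕ) (hq : 2 ≤ q)
    (P L : Type*) [Fintype P] [Fintype L] [Membership P L]
    [Configuration.ProjectivePlane P L]
    (horder : Configuration.ProjectivePlane.order P L = q)
    (μ : ℕ) (hμ : 2 ≤ μ)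
    (δ : ℝ) (hδ : δ = 1 / Real.sqrt ((q + 1) * Real.log (q + 1)))
    (D : ℝ) (hD : 1 ≤ D)
    (S : Finset P) (hS : IsMuSaturating L (↑S : Set P) (μ - 1))
    (hcard : (S.card : ℝ) ≤ 2 * D * Real.sqrt ((q + 1) * Real.log (q + 1)) + 2) :
    ∃ T : Finset P, IsMuSaturating L (↑T : Set P) μ ∧
      (T.card : ℝ) ≤
        2 * (D + 1 + (D + δ) / q + δ) * Real.sqrt ((q + 1) * Real.log (q + 1)) + 2 := by
  set r := Real.sqrt ((q + 1) * Real.log (q + 1))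
  have hr : 0 < r := Real.sqrt_pos.mpr (mul_pos (by positivity) (Real.log_pos (by simp; omega)))
  have hbound := two_mul_add_two_mul_add_four_le (q := q) (r := r) (δ := δ) (D := D)
    (by positivity) (by rw [hδ, one_div_mul_cancel hr.ne']) (by nlinarith)
  rcases lt_or_ge q 4 with hq4 | hq4
  · refine ⟨univ, fun Q hQ => absurd (by simp) hQ, ?_⟩
    rw [card_univ, ProjectivePlane.card_points P L, horder]
    push_cast
    nlinarith [sq_add_add_one_le_of_lt_four hq hq4]
  obtain ⟨T, hT, hTcard⟩ := hS.exists_card_le_add_ceil (by omega) (horder ▸ hq4)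
  rw [Nat.sub_add_cancel (by omega)] at hT
  refine ⟨T, hT, ?_⟩
  rw [horder] at hTcard
  have := Nat.ceil_lt_add_one (by positivity : 0 ≤ 2 * r)
  have : ((#T : ℕ) : ℝ) ≤ ((#S + (⌈2 * r⌉₊ + 1) : ℕ) : ℝ) := Nat.cast_le.mpr hTcard
  push_cast at this
  linarith
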